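/- arXiv:1401.1335 — 3 statements merged into one kernel-verified Lean document; each statement's English description precedes it below -/
import Mathlib

section
/- Let G be a finite group, let p be a prime divisor of |G| with gcd(|G|, p-1) = 1, and suppose that a Sylow p-subgroup of G is cyclic. Then G is p-nilpotent. -/
open scoped Pointwise

/-- A group `G` is `p`-nilpotent if it has a normal `p`-complement, i.e. a normal
subgroup `N` whose order is not divisible by `p` and whose index is a power of `p`. -/
def IsPNilpotent (p : ℕ) (G : Type*) [Group G] : Prop :=
  ∃ N : Subgroup G, N.Normal ∧ ¬ p ∣ Nat.card N ∧ ∃ k : ℕ, N.index = p ^ k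

/-- A subgroup `H` of `G` is c-normal in `G` if there is a normal subgroup `T`
with `G = HT` and `H ⊓ T` contained in the normal core of `H`. -/
def Subgroup.IsCNormal {G : Type*} [Group G] (H : Subgroup G) : Prop :=
  ∃ T : Subgroup G, T.Normal ∧ (H : Set G) * (T : Set G) = Set.univ ∧ H ⊓ T ≤ H.normalCore

/-- A subgroup `H` of `G` is S-quasinormal in `G` if it permutes with every Sylow
subgroup of `G`. -/
def Subgroup.IsSQuasinormal {G : Type*} [Group G] (H : Subgroup G) : Prop :=
  ∀ q : ℕ, q.Prime → ∀ Q : Sylow q G,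
    (H : Set G) * ((Q : Subgroup G) : Set G) = ((Q : Subgroup G) : Set G) * (H : Set G)

/-- A subgroup `H` of `G` has a `p`-nilpotent supplement in `G` if there is a
subgroup `K` with `G = HK` and `K` `p`-nilpotent. -/
def HasPNilpotentSupplement (p : ℕ) {G : Type*} [Group G] (H : Subgroup G) : Prop :=
  ∃ K : Subgroup G, (H : Set G) * (K : Set G) = Set.univ ∧ IsPNilpotent p K

/-- `M` is a maximal (proper) subgroup of `P`. -/
def IsMaximalSubgroupOf {G : Type*} [Group G] (M P : Subgroup G) : Prop :=
  M < P ∧ ∀ K : Subgroup G, M < K → K ≤ P → K = P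

/-- `P` is a Sylow `p`-subgroup of the subgroup `E`: a maximal `p`-subgroup of `E`. -/
def IsSylowSubgroupOf (p : ℕ) {G : Type*} [Group G] (P E : Subgroup G) : Prop :=
  P ≤ E ∧ IsPGroup p P ∧ ∀ Q : Subgroup G, Q ≤ E → IsPGroup p Q → P ≤ Q → Q = P

/-- A group is supersolvable if it has a chain of subgroups from `⊥` to `⊤`,
each normal in `G`, in which each successive quotient is cyclic (i.e. each step
is generated by the previous one together with a single element). -/
def IsSupersolvable (G : Type*) [Group G] : Prop :=
  ∃ (n : ℕ) (c : ℕ → Subgroup G), c 0 = ⊥ ∧ c n = ⊤ ∧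
    (∀ i, c i ≤ c (i + 1)) ∧ (∀ i, (c i).Normal) ∧
    ∀ i, ∃ x ∈ c (i + 1), c i ⊔ Subgroup.zpowers x = c (i + 1)

/-!
Burnside's transfer theorem reduces `p`-nilpotency to `N_G(P) ≤ C_G(P)` for a Sylow
`p`-subgroup `P`. Conjugation embeds `N_G(P)/C_G(P)` into `Aut P`, of order
`φ(p^k) = p^(k-1) (p-1)` for cyclic `P` of order `p^k`. Since the abelian group `P` lies in
`C_G(P)`, the order of `N_G(P)/C_G(P)` divides `|G : P|`, prime to `p`, and it divides `|G|`,
prime to `p - 1`; so it is `1`.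
-/

open Subgroup

namespace IsCyclic

variable {G : Type*} [Group G] [Finite G] {p : ℕ} [Fact p.Prime] {P : Sylow p G}

theorem normalizer_le_centralizer_of_coprime_card_sub_one (hP : IsCyclic P)
    (hcop : (Nat.card G).Coprime (p - 1)) :
    normalizer (P : Set G) ≤ centralizer (P : Set G) := by
  have hembed := card_dvd_of_injective _ (QuotientGroup.kerLift_injective P.normalizerMonoidHom)
  rw [normalizerMonoidHom_ker, ← index, ← relIndex] at hembed
  refine relIndex_eq_one.mp (Nat.eq_one_of_dvd_coprimes ?_ dvd_rfl hembed)
  obtain ⟨k, hk⟩ := P.2.exists_card_eq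
  rcases Nat.eq_zero_or_pos k with rfl | hk0
  · rw [hP.card_mulAut, hk, pow_zero, Nat.totient_one]
    exact Nat.coprime_one_right _
  rw [hP.card_mulAut, hk, Nat.totient_prime_pow Fact.out hk0]
  refine (Nat.Coprime.pow_right _ ?_).mul_right ?_
  · have hdvd_index : (centralizer (P : Set G)).relIndex (normalizer (P : Set G)) ∣ P.index :=
      (relIndex_dvd_of_le_left _ P.le_centralizer).trans
        (relIndex_dvd_index_of_le P.le_normalizer)
    exact Nat.Coprime.coprime_dvd_left hdvd_index
      ((Nat.Prime.coprime_iff_not_dvd Fact.out).mpr P.not_dvd_index).symm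
  · exact hcop.coprime_dvd_left ((relIndex_dvd_card ..).trans (card_subgroup_dvd_card _))

end IsCyclic

theorem Sylow.isPNilpotent_of_normalizer_le_centralizer {G : Type*} [Group G] [Finite G]
    {p : ℕ} [Fact p.Prime] (P : Sylow p G)
    (hP : normalizer (P : Set G) ≤ centralizer (P : Set G)) : IsPNilpotent p G := by
  obtain ⟨k, hk⟩ := P.2.exists_card_eq
  have hcompl := MonoidHom.ker_transferSylow_isComplement' P hP
  exact ⟨_, MonoidHom.normal_ker _, MonoidHom.not_dvd_card_ker_transferSylow P hP, k,
    hk ▸ hcompl.symm.index_eq_card⟩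

theorem stmt0_general {G : Type*} [Group G] [Fintype G] {p : ℕ}
    (hp : p.Prime)
    (hgcd : Nat.gcd (Nat.card G) (p - 1) = 1)
    (P : Sylow p G) (hcyc : IsCyclic (P : Subgroup G)) :
    IsPNilpotent p G :=
  have := Fact.mk hp
  P.isPNilpotent_of_normalizer_le_centralizer
    (hcyc.normalizer_le_centralizer_of_coprime_card_sub_one hgcd)

theorem stmt0 {G : Type*} [Group G] [Fintype G] {p : ℕ}
    (hp : p.Prime) (hdvd : p ∣ Nat.card G)
    (hgcd : Nat.gcd (Nat.card G) (p - 1) = 1)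
    (P : Sylow p G) (hcyc : IsCyclic (P : Subgroup G)) :
    IsPNilpotent p G :=
  stmt0_general hp hgcd P hcyc
end

section
/- Let G be a finite group and p a prime divisor of |G| with gcd(|G|, p-1) = 1. If N is a normal subgroup of G such that the order of a Sylow p-subgroup of N is at most p and the quotient G/N is p-nilpotent, then G is p-nilpotent. -/
open scoped Pointwise

/-!
Let `M / N` be the normal `p`-complement of `G / N`. Since `p ∤ |M : N|`, a Sylow `p`-subgroup
of `M` has order at most `p`, so by Burnside's transfer theorem `M` has a normal `p`-complement
`K`: here `N_M(P) / C_M(P)` embeds in `Aut P`, of order `p - 1`, which is coprime to `|M|`.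
Being the set of `p'`-elements of `M`, `K` is characteristic in `M`, hence normal in `G`, and
`|G : K| = |G : M| |M : K|` is a power of `p`.
-/

structure Subgroup.IsNormalPComplement (p : ℕ) {G : Type*} [Group G] (K : Subgroup G) : Prop where
  normal : K.Normal
  not_dvd_card : ¬ p ∣ Nat.card K
  exists_index_eq_pow : ∃ k : ℕ, K.index = p ^ k

theorem isPNilpotent_iff_exists_isNormalPComplement {p : ℕ} {G : Type*} [Group G] :
    IsPNilpotent p G ↔ ∃ K : Subgroup G, K.IsNormalPComplement p :=
  ⟨fun ⟨K, hn, hc, hi⟩ ↦ ⟨K, hn, hc, hi⟩, fun ⟨K, hn, hc, hi⟩ ↦ ⟨K, hn, hc, hi⟩⟩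

namespace Subgroup.IsNormalPComplement

variable {G : Type*} [Group G] {p : ℕ} {K : Subgroup G}

theorem mem_iff_not_dvd_orderOf (hp : p.Prime) (hK : K.IsNormalPComplement p) {x : G} :
    x ∈ K ↔ ¬ p ∣ orderOf x := by
  have := hK.normal
  obtain ⟨k, hk⟩ := hK.exists_index_eq_pow
  refine ⟨fun hx hpx ↦ hK.not_dvd_card (hpx.trans (orderOf_dvd_natCard K hx)), fun hx ↦ ?_⟩
  have hcop : (orderOf x).Coprime (p ^ k) := ((hp.coprime_iff_not_dvd.mpr hx).pow_left k).symm
  have hquot : orderOf (x : G ⧸ K) = 1 :=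
    Nat.eq_one_of_dvd_coprimes hcop (orderOf_map_dvd (QuotientGroup.mk' K) x)
      (hk ▸ _root_.orderOf_dvd_natCard _)
  rwa [orderOf_eq_one_iff, QuotientGroup.eq_one_iff] at hquot

theorem characteristic (hp : p.Prime) (hK : K.IsNormalPComplement p) : K.Characteristic :=
  characteristic_iff_comap_eq.mpr fun φ ↦ by
    ext x
    simp only [mem_comap, hK.mem_iff_not_dvd_orderOf hp, MulEquiv.coe_toMonoidHom,
      MulEquiv.orderOf_eq]

theorem map_subtype (hp : p.Prime) {M : Subgroup G} [M.Normal] {K : Subgroup M}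
    (hK : K.IsNormalPComplement p) {k : ℕ} (hM : M.index = p ^ k) :
    (K.map M.subtype).IsNormalPComplement p := by
  have := hK.characteristic hp
  obtain ⟨j, hj⟩ := hK.exists_index_eq_pow
  refine ⟨inferInstance, ?_, j + k, ?_⟩
  · rw [card_map_of_injective M.subtype_injective]
    exact hK.not_dvd_card
  · rw [index_map_subtype, hj, hM, pow_add]

end Subgroup.IsNormalPComplement

theorem IsPNilpotent.of_normal_of_index_eq_pow {G : Type*} [Group G] {p : ℕ} (hp : p.Prime)
    {M : Subgroup G} [M.Normal] (hM : IsPNilpotent p M) {k : ℕ} (hidx : M.index = p ^ k) :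
    IsPNilpotent p G := by
  obtain ⟨K, hK⟩ := isPNilpotent_iff_exists_isNormalPComplement.mp hM
  exact isPNilpotent_iff_exists_isNormalPComplement.mpr ⟨_, hK.map_subtype hp hidx⟩

section Burnside

open Subgroup

variable {G : Type*} [Group G] [Finite G] {p : ℕ} [Fact p.Prime]

theorem Sylow.card_eq_of_not_sq_dvd_card (P : Sylow p G) (hdvd : p ∣ Nat.card G)
    (hsq : ¬ p ^ 2 ∣ Nat.card G) : Nat.card P = p := by
  have hp : p.Prime := Fact.out
  have hG : Nat.card G ≠ 0 := Nat.card_pos.ne'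
  have hmult : (Nat.card G).factorization p = 1 := by
    rw [← pow_one p, hp.pow_dvd_iff_le_factorization hG] at hdvd
    rw [hp.pow_dvd_iff_le_factorization hG] at hsq
    omega
  rw [P.card_eq_multiplicity, hmult, pow_one]

theorem Sylow.normalizer_le_centralizer_of_card_eq_prime (P : Sylow p G)
    (hP : Nat.card P = p) (hgcd : Nat.Coprime (Nat.card G) (p - 1)) :
    normalizer (P : Set G) ≤ centralizer (P : Set G) := by
  have := isCyclic_of_prime_card hP
  have hker : P.normalizerMonoidHom.ker.index = 1 := by
    refine Nat.eq_one_of_dvd_coprimes hgcd ?_ ?_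
    · exact (index_dvd_card _).trans (card_subgroup_dvd_card _)
    · have hAut : Nat.card (MulAut P) = p - 1 := by
        rw [IsCyclic.card_mulAut, hP, Nat.totient_prime Fact.out]
      rw [index_ker, ← hAut]
      exact card_subgroup_dvd_card _
  rwa [index_eq_one, normalizerMonoidHom_ker, subgroupOf_eq_top] at hker

/-- **Burnside's normal `p`-complement theorem**, in the case of a Sylow subgroup of order `p`. -/
theorem isPNilpotent_of_not_sq_dvd_card (hsq : ¬ p ^ 2 ∣ Nat.card G)
    (hgcd : Nat.Coprime (Nat.card G) (p - 1)) : IsPNilpotent p G := by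
  by_cases hdvd : p ∣ Nat.card G
  · obtain ⟨P⟩ : Nonempty (Sylow p G) := inferInstance
    have hP := P.card_eq_of_not_sq_dvd_card hdvd hsq
    have hNC := P.normalizer_le_centralizer_of_card_eq_prime hP hgcd
    refine ⟨_, inferInstance, MonoidHom.not_dvd_card_ker_transferSylow P hNC, 1, ?_⟩
    rw [(MonoidHom.ker_transferSylow_isComplement' P hNC).symm.index_eq_card, hP, pow_one]
  · exact ⟨⊤, inferInstance, by rwa [Subgroup.card_top], 0, by rw [index_top, pow_zero]⟩

end Burnside

theorem not_sq_dvd_card_of_forall_sylow_card_le {G : Type*} [Group G] [Finite G] {p : ℕ}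
    [Fact p.Prime] (h : ∀ Q : Sylow p G, Nat.card Q ≤ p) : ¬ p ^ 2 ∣ Nat.card G := by
  intro hsq
  obtain ⟨K, hK⟩ := Sylow.exists_subgroup_card_pow_prime p hsq
  obtain ⟨Q, hKQ⟩ := (IsPGroup.of_card hK).exists_le_sylow
  have hp : 1 < p := (Fact.out : p.Prime).one_lt
  have : p ^ 2 ≤ p := hK ▸ (Subgroup.card_le_of_le hKQ).trans (h Q)
  nlinarith

theorem QuotientGroup.card_comap_mk' {G : Type*} [Group G] (N : Subgroup G) [N.Normal]
    (H : Subgroup (G ⧸ N)) : Nat.card (H.comap (mk' N)) = Nat.card N * Nat.card H := by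
  have hN : N ≤ H.comap (mk' N) := fun x hx ↦ by
    simp [Subgroup.mem_comap, (eq_one_iff x).mpr hx, H.one_mem]
  have hrel := Subgroup.relIndex_ker (K := H.comap (mk' N)) (mk' N)
  rw [ker_mk', Subgroup.map_comap_eq_self_of_surjective (mk'_surjective N)] at hrel
  rw [← Subgroup.relIndex_bot_left, ← Subgroup.relIndex_mul_relIndex ⊥ N _ bot_le hN,
    Subgroup.relIndex_bot_left, hrel]

theorem stmt1_general {G : Type*} [Group G] [Fintype G] {p : ℕ}
    (hp : p.Prime)
    (hgcd : Nat.gcd (Nat.card G) (p - 1) = 1)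
    (N : Subgroup G) [N.Normal]
    (hNp : ∀ Q : Sylow p ↥N, Nat.card (Q : Subgroup ↥N) ≤ p)
    (hquot : IsPNilpotent p (G ⧸ N)) :
    IsPNilpotent p G := by
  have := Fact.mk hp
  obtain ⟨K, hK⟩ := isPNilpotent_iff_exists_isNormalPComplement.mp hquot
  obtain ⟨k, hidx⟩ := hK.exists_index_eq_pow
  let M := K.comap (QuotientGroup.mk' N)
  have : M.Normal := hK.normal.comap _
  have hMidx : M.index = p ^ k := by
    rw [Subgroup.index_comap_of_surjective _ (QuotientGroup.mk'_surjective N), hidx]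
  have hMsq : ¬ p ^ 2 ∣ Nat.card M := by
    have hcop : (p ^ 2).Coprime (Nat.card K) :=
      (hp.coprime_iff_not_dvd.mpr hK.not_dvd_card).pow_left 2
    rw [QuotientGroup.card_comap_mk']
    exact fun h ↦ not_sq_dvd_card_of_forall_sylow_card_le hNp (hcop.dvd_of_dvd_mul_right h)
  have hMgcd : Nat.Coprime (Nat.card M) (p - 1) :=
    Nat.Coprime.coprime_dvd_left (Subgroup.card_subgroup_dvd_card M) hgcd
  exact (isPNilpotent_of_not_sq_dvd_card hMsq hMgcd).of_normal_of_index_eq_pow hp hMidx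

theorem stmt1 {G : Type*} [Group G] [Fintype G] {p : ℕ}
    (hp : p.Prime) (hdvd : p ∣ Nat.card G)
    (hgcd : Nat.gcd (Nat.card G) (p - 1) = 1)
    (N : Subgroup G) [N.Normal]
    (hNp : ∀ Q : Sylow p ↥N, Nat.card (Q : Subgroup ↥N) ≤ p)
    (hquot : IsPNilpotent p (G ⧸ N)) :
    IsPNilpotent p G :=
  stmt1_general hp hgcd N hNp hquot
end

section
/- Let G be a finite group and p a prime divisor of |G| with gcd(|G|, p-1) = 1. Let P be a Sylow p-subgroup of G. If every subgroup of P of order p, and (in case P is a non-abelian 2-group) every cyclic subgroup of P of order 4, has a p-nilpotent supplement in G, then G is p-nilpotent. -/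
open scoped Pointwise

/-!
Induction on `|G|`. When `p ∣ |G|`, pick a subgroup `⟨x⟩` of order `p` with a `p`-nilpotent
supplement `K`. Either `K = G`, or `⟨x⟩ ∩ K = 1` and `K` has index `p`. Then `G / core K` embeds
in `S_p`, so its Sylow `p`-subgroups have order `p`. As `Aut (C_p)` has order `p - 1`, coprime to
`|G|`, such a Sylow subgroup is central in its normalizer, and Burnside's transfer theorem yields
a normal subgroup `M` of index `p`. Supplements of the subgroups of order `p` of `M` are obtained
by intersecting with `M` (Dedekind), so `M` is `p`-nilpotent by induction; its normal
`p`-complement is a normal Hall subgroup of the normal subgroup `M`, hence normal in `G`.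
Every subgroup of order `p` is conjugate into `P`, which is how the hypothesis on `P` reaches all
of them.
-/

open scoped Nat

namespace Subgroup

variable {G : Type*} [Group G]

theorem le_of_coprime_index {N : Subgroup G} [N.Normal] {A : Subgroup G}
    (h : (Nat.card A).Coprime N.index) : A ≤ N := by
  have h1 : Nat.card (A.map (QuotientGroup.mk' N)) ∣ Nat.card A := A.card_map_dvd _
  have h2 : Nat.card (A.map (QuotientGroup.mk' N)) ∣ N.index :=
    N.index_eq_card ▸ card_subgroup_dvd_card _
  rw [← QuotientGroup.ker_mk' N, ← map_eq_bot_iff, ← card_eq_one]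
  exact Nat.eq_one_of_dvd_coprimes h h1 h2

theorem normal_of_coprime_relIndex {M N : Subgroup G} [M.Normal] (hNM : N ≤ M)
    [(N.subgroupOf M).Normal] (h : (Nat.card N).Coprime (N.relIndex M)) : N.Normal := by
  refine ⟨fun n hn g => ?_⟩
  let A := N.map (MulAut.conj g).toMonoidHom
  have hAM : A ≤ M := by
    rintro _ ⟨m, hm, rfl⟩
    exact ‹M.Normal›.conj_mem m (hNM hm) g
  have hA : Nat.card (A.subgroupOf M) = Nat.card N := by
    rw [Nat.card_congr (subgroupOfEquivOfLe hAM).toEquiv,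
      card_map_of_injective (MulAut.conj g).injective]
  have hle := le_of_coprime_index (N := N.subgroupOf M) (A := A.subgroupOf M) (hA ▸ h)
  exact hle (x := ⟨_, hAM ⟨n, hn, rfl⟩⟩) ⟨n, hn, rfl⟩

theorem eq_top_of_le_of_mul_eq_univ {H K : Subgroup G} (hHK : H ≤ K)
    (h : (H : Set G) * (K : Set G) = Set.univ) : K = ⊤ := by
  refine (eq_top_iff' K).mpr fun g => ?_
  obtain ⟨a, ha, b, hb, rfl⟩ := Set.eq_univ_iff_forall.mp h g
  exact K.mul_mem (hHK ha) hb

theorem index_eq_card_of_mul_eq_univ {H K : Subgroup G} (hH : (Nat.card H).Prime)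
    (hHK : (H : Set G) * (K : Set G) = Set.univ) (hK : K ≠ ⊤) : K.index = Nat.card H := by
  have : Finite H := Nat.finite_of_card_ne_zero hH.ne_zero
  refine (isComplement'_of_disjoint_and_mul_eq_univ ?_ hHK).index_eq_card
  rcases hH.eq_one_or_self_of_dvd _ (card_dvd_of_le (inf_le_left : H ⊓ K ≤ H)) with h | h
  · exact disjoint_iff.mpr (card_eq_one.mp h)
  · have hle : H ≤ K := (eq_of_le_of_card_ge inf_le_left h.ge).ge.trans inf_le_right
    exact absurd (eq_top_of_le_of_mul_eq_univ hle hHK) hK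

theorem index_normalCore_dvd_factorial [Finite G] (H : Subgroup G) :
    H.normalCore.index ∣ H.index ! := by
  rw [normalCore_eq_ker, index_ker, index_eq_card, ← Nat.card_perm]
  exact card_subgroup_dvd_card _

theorem normalizer_le_centralizer_of_coprime_card_mulAut (H : Subgroup G)
    (h : (Nat.card G).Coprime (Nat.card (MulAut H))) :
    normalizer (H : Set G) ≤ centralizer (H : Set G) := by
  have key := card_dvd_of_injective _ (QuotientGroup.kerLift_injective H.normalizerMonoidHom)
  rw [normalizerMonoidHom_ker, ← index, ← relIndex] at key
  exact relIndex_eq_one.mp <| Nat.eq_one_of_dvd_coprimes h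
    ((relIndex_dvd_card _ _).trans (card_subgroup_dvd_card _)) key

theorem normalizer_le_centralizer_of_card_eq_prime {p : ℕ} (hp : p.Prime)
    {H : Subgroup G} (hH : Nat.card H = p) (hG : (Nat.card G).Coprime (p - 1)) :
    normalizer (H : Set G) ≤ centralizer (H : Set G) := by
  have : Finite H := Nat.finite_of_card_ne_zero (hH ▸ hp.ne_zero)
  have : IsCyclic H := isCyclic_of_prime_card (hp := ⟨hp⟩) hH
  refine H.normalizer_le_centralizer_of_coprime_card_mulAut ?_
  rwa [IsCyclic.card_mulAut, hH, Nat.totient_prime hp]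

end Subgroup

theorem Nat.Prime.sq_not_dvd_factorial {p : ℕ} (hp : p.Prime) : ¬ p ^ 2 ∣ p ! := by
  rw [← Nat.mul_factorial_pred hp.ne_zero, sq, Nat.mul_dvd_mul_iff_left hp.pos, hp.dvd_factorial]
  have := hp.pos
  omega

section NormalSubgroupOfIndexP

variable {G : Type*} [Group G] [Finite G] {p : ℕ}

theorem exists_normal_index_eq_prime_of_sq_not_dvd_card (hp : p.Prime) (hdvd : p ∣ Nat.card G)
    (hsq : ¬ p ^ 2 ∣ Nat.card G) (hG : (Nat.card G).Coprime (p - 1)) :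
    ∃ M : Subgroup G, M.Normal ∧ M.index = p := by
  have := Fact.mk hp
  obtain ⟨P⟩ : Nonempty (Sylow p G) := inferInstance
  obtain ⟨k, hk⟩ := P.2.exists_card_eq
  have hk1 : k = 1 := by
    have h1 : p ∣ p ^ k := by rw [← hk]; exact P.dvd_card_of_dvd_card hdvd
    have h2 : ¬ p ^ 2 ∣ p ^ k := fun h =>
      hsq (h.trans (by rw [← hk]; exact P.1.card_subgroup_dvd_card))
    rcases k with _ | _ | k
    · exact absurd (Nat.le_of_dvd one_pos h1) hp.one_lt.not_ge
    · rfl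
    · exact absurd (pow_dvd_pow p (by omega)) h2
  have hP : Nat.card P = p := by rw [hk, hk1, pow_one]
  have hNC := Subgroup.normalizer_le_centralizer_of_card_eq_prime hp hP hG
  exact ⟨_, MonoidHom.normal_ker (MonoidHom.transferSylow P hNC),
    (MonoidHom.ker_transferSylow_isComplement' P hNC).symm.index_eq_card.trans hP⟩

theorem exists_normal_index_eq_prime_of_index_eq_prime (hp : p.Prime)
    (hG : (Nat.card G).Coprime (p - 1)) {K : Subgroup G} (hK : K.index = p) :
    ∃ M : Subgroup G, M.Normal ∧ M.index = p := by
  set C := K.normalCore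
  have hC : Nat.card (G ⧸ C) = C.index := C.index_eq_card.symm
  obtain ⟨M, hM, hMi⟩ := exists_normal_index_eq_prime_of_sq_not_dvd_card (G := G ⧸ C) hp
    (hC ▸ hK ▸ Subgroup.index_dvd_of_le K.normalCore_le)
    (hC ▸ fun h => hp.sq_not_dvd_factorial (hK ▸ h.trans K.index_normalCore_dvd_factorial))
    (hG.coprime_dvd_left (hC ▸ C.index_dvd_card))
  exact ⟨M.comap (QuotientGroup.mk' C), hM.comap _,
    by rw [Subgroup.index_comap_of_surjective _ (QuotientGroup.mk'_surjective C), hMi]⟩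

end NormalSubgroupOfIndexP

namespace IsPNilpotent

variable {p : ℕ} {G : Type*} [Group G]

theorem of_mulEquiv {G' : Type*} [Group G'] (e : G ≃* G') (h : IsPNilpotent p G) :
    IsPNilpotent p G' := by
  obtain ⟨N, hN, hcard, k, hk⟩ := h
  refine ⟨N.map (e : G →* G'), hN.map _ e.surjective, ?_, k, ?_⟩
  · rwa [Subgroup.card_map_of_injective e.injective]
  · rwa [Subgroup.index_map_equiv]

theorem of_not_dvd_card (h : ¬ p ∣ Nat.card G) : IsPNilpotent p G :=
  ⟨⊤, inferInstance, by rwa [Subgroup.card_top], 0, by simp⟩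

theorem subgroup (hp : p.Prime) (h : IsPNilpotent p G) (H : Subgroup G) :
    IsPNilpotent p H := by
  obtain ⟨N, hN, hcard, k, hk⟩ := h
  refine ⟨N.subgroupOf H, Subgroup.normal_subgroupOf, ?_, ?_⟩
  · rw [← Subgroup.card_subtype, Subgroup.subgroupOf_map_subtype]
    exact fun hdvd => hcard (hdvd.trans (Subgroup.card_dvd_of_le inf_le_left))
  · obtain ⟨j, -, hj⟩ :=
      (Nat.dvd_prime_pow hp).mp (hk ▸ Subgroup.relIndex_dvd_index_of_normal N H)
    exact ⟨j, hj⟩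

theorem of_normal_index_eq_pow (hp : p.Prime) {M : Subgroup G} [M.Normal] {k : ℕ}
    (hM : M.index = p ^ k) (h : IsPNilpotent p M) : IsPNilpotent p G := by
  obtain ⟨N, hN, hcard, j, hj⟩ := h
  set N' : Subgroup G := N.map M.subtype
  have hN'M : N' ≤ M := Subgroup.map_subtype_le N
  have hN'N : N'.subgroupOf M = N := N.comap_map_eq_self_of_injective M.subtype_injective
  have hcard' : Nat.card N' = Nat.card N := Subgroup.card_subtype M N
  have : (N'.subgroupOf M).Normal := hN'N ▸ hN
  have hrel : N'.relIndex M = p ^ j := by rw [Subgroup.relIndex, hN'N, hj]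
  have : N'.Normal := Subgroup.normal_of_coprime_relIndex hN'M <| by
    rw [hrel, hcard']
    exact ((Nat.Prime.coprime_iff_not_dvd hp).mpr hcard).symm.pow_right j
  refine ⟨N', this, hcard' ▸ hcard, j + k, ?_⟩
  rw [← Subgroup.relIndex_mul_index hN'M, hrel, hM, pow_add]

end IsPNilpotent
namespace HasPNilpotentSupplement

variable {p : ℕ} {G : Type*} [Group G] {H : Subgroup G}

theorem map {G' : Type*} [Group G'] (e : G ≃* G') (h : HasPNilpotentSupplement p H) :
    HasPNilpotentSupplement p (H.map (e : G →* G')) := by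
  obtain ⟨K, hHK, hK⟩ := h
  refine ⟨K.map (e : G →* G'), ?_, hK.of_mulEquiv (K.equivMapOfInjective _ e.injective)⟩
  rw [Subgroup.coe_map, Subgroup.coe_map, ← Set.image_mul, hHK,
    Set.image_univ_of_surjective (f := ⇑(e : G →* G')) e.surjective]

theorem of_map {G' : Type*} [Group G'] (e : G ≃* G')
    (h : HasPNilpotentSupplement p (H.map (e : G →* G'))) : HasPNilpotentSupplement p H := by
  simpa [Subgroup.map_map] using h.map e.symm

theorem of_map_subtype (hp : p.Prime) {M : Subgroup G} {H : Subgroup M}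
    (h : HasPNilpotentSupplement p (H.map M.subtype)) : HasPNilpotentSupplement p H := by
  obtain ⟨K, hHK, hK⟩ := h
  refine ⟨K.subgroupOf M, Set.eq_univ_of_forall fun m => ?_, ?_⟩
  · obtain ⟨_, ⟨a, ha, rfl⟩, b, hb, hab⟩ := Set.eq_univ_iff_forall.mp hHK m
    have hbM : b ∈ M := eq_inv_mul_of_mul_eq hab ▸ M.mul_mem (M.inv_mem a.2) m.2
    exact ⟨a, ha, ⟨b, hbM⟩, hb, Subtype.ext hab⟩
  · rw [← Subgroup.inf_subgroupOf_right]
    exact (hK.subgroup hp ((K ⊓ M).subgroupOf K)).of_mulEquiv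
      ((Subgroup.subgroupOfEquivOfLe inf_le_left).trans
        (Subgroup.subgroupOfEquivOfLe inf_le_right).symm)

end HasPNilpotentSupplement

theorem isPNilpotent_of_forall_hasPNilpotentSupplement {p : ℕ} (hp : p.Prime)
    {G : Type*} [Group G] [Finite G] (hG : (Nat.card G).Coprime (p - 1))
    (h : ∀ H : Subgroup G, Nat.card H = p → HasPNilpotentSupplement p H) :
    IsPNilpotent p G := by
  induction hn : Nat.card G using Nat.strong_induction_on generalizing G with
  | _ n ih =>
  by_cases hdvd : p ∣ Nat.card G
  case neg => exact IsPNilpotent.of_not_dvd_card hdvd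
  have := Fact.mk hp
  obtain ⟨x, hx⟩ := exists_prime_orderOf_dvd_card' p hdvd
  obtain ⟨K, hxK, hK⟩ := h (Subgroup.zpowers x) (by rw [Nat.card_zpowers, hx])
  by_cases hKtop : K = ⊤
  case pos => exact hK.of_mulEquiv (hKtop ▸ Subgroup.topEquiv)
  have hKi : K.index = p := by
    rw [Subgroup.index_eq_card_of_mul_eq_univ (by rwa [Nat.card_zpowers, hx]) hxK hKtop,
      Nat.card_zpowers, hx]
  obtain ⟨M, hM, hMi⟩ := exists_normal_index_eq_prime_of_index_eq_prime hp hG hKi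
  refine IsPNilpotent.of_normal_index_eq_pow hp (hMi.trans (pow_one p).symm)
    (ih (Nat.card M) ?_ (hG.coprime_dvd_left M.card_subgroup_dvd_card) (fun H hH => ?_) rfl)
  · rw [← hn, ← M.card_mul_index, hMi]
    exact lt_mul_of_one_lt_right Nat.card_pos hp.one_lt
  · exact (h _ (by rwa [Subgroup.card_subtype])).of_map_subtype hp

theorem Sylow.exists_map_conj_le {G : Type*} [Group G] [Finite G] {p : ℕ} [Fact p.Prime]
    (P : Sylow p G) {H : Subgroup G} (hH : IsPGroup p H) :
    ∃ g : G, H.map (MulAut.conj g : G →* G) ≤ P := by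
  obtain ⟨Q, hQ⟩ := hH.exists_le_sylow
  obtain ⟨g, rfl⟩ := MulAction.exists_smul_eq G Q P
  refine ⟨g, ?_⟩
  rw [Sylow.coe_subgroup_smul]
  exact (Subgroup.pointwise_smul_le_pointwise_smul_iff (a := MulAut.conj g)).mpr hQ

theorem stmt18_general {G : Type*} [Group G] [Fintype G] {p : ℕ}
    (hp : p.Prime)
    (hgcd : Nat.gcd (Nat.card G) (p - 1) = 1)
    (P : Sylow p G)
    (h1 : ∀ H : Subgroup G, H ≤ (P : Subgroup G) → Nat.card H = p →
      HasPNilpotentSupplement p H) :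
    IsPNilpotent p G := by
  have := Fact.mk hp
  refine isPNilpotent_of_forall_hasPNilpotentSupplement hp hgcd fun H hH => ?_
  obtain ⟨g, hg⟩ := P.exists_map_conj_le (IsPGroup.of_card (hH.trans (pow_one p).symm))
  exact (h1 _ hg (by rwa [Subgroup.card_map_of_injective (MulAut.conj g).injective])).of_map _

theorem stmt18 {G : Type*} [Group G] [Fintype G] {p : ℕ}
    (hp : p.Prime) (hdvd : p ∣ Nat.card G)
    (hgcd : Nat.gcd (Nat.card G) (p - 1) = 1)
    (P : Sylow p G)
    (h1 : ∀ H : Subgroup G, H ≤ (P : Subgroup G) → Nat.card H = p →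
      HasPNilpotentSupplement p H)
    (h4 : IsPGroup 2 (P : Subgroup G) → ¬ IsMulCommutative (P : Subgroup G) →
      ∀ H : Subgroup G, H ≤ (P : Subgroup G) → IsCyclic H → Nat.card H = 4 →
        HasPNilpotentSupplement p H) :
    IsPNilpotent p G :=
  stmt18_general hp hgcd P h1
end
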